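/- Let ω > 0 and k ≥ 1 an integer. The function U(r e^{iθ}, t) = Re( e^{ik(θ+ωt)} I_k( (√(2ωk)/2)(1+i) r ) ), where I_k is the modified Bessel function of the first kind of order k, is an entire eternal solution of the heat equation U_t − ΔU = 0 on ℝ² × ℝ. -/

import Mathlib

open Complex Real

/-- `Θ_ν(z) = Σ_{n≥0} (1/(n! Γ(n+1+ν))) (z/4)^n`. -/
noncomputable def Theta (ν z : ℂ) : ℂ :=
  ∑' n : ℕ, (1 / ((n.factorial : ℂ) * Complex.Gamma ((n : ℂ) + 1 + ν))) * (z / 4) ^ n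

/-- The modified Bessel function of the first kind of integer order `k`:
`I_k(z) = (z/2)^k Θ_k(z²)`. -/
noncomputable def besselI (k : ℕ) (z : ℂ) : ℂ :=
  (z / 2) ^ k * Theta (k : ℂ) (z ^ 2)

/-- The rotating caloric function
`U(re^{iθ}, t) = Re(e^{ik(θ+ωt)} I_k((√(2ωk)/2)(1+i) r))`, written in Cartesian
coordinates with `z = x + iy`, `r = |z|`, `θ = arg z`. -/
noncomputable def rotCaloric (ω : ℝ) (k : ℕ) (x y t : ℝ) : ℝ :=
  (Complex.exp (Complex.I * (k : ℂ) * ((Complex.arg (x + y * Complex.I) : ℂ) + (ω : ℂ) * (t : ℂ))) *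
    besselI k (((Real.sqrt (2 * ω * k) / 2 : ℝ) : ℂ) * (1 + Complex.I) *
      ((‖(x + y * Complex.I : ℂ)‖ : ℝ) : ℂ))).re

/-!
Write `z = x + iy` and `μ = iωk`. Since `((√(2ωk)/2)(1+i))² = μ` and `r^k e^{ikθ} = z^k`, the
function is `Re (c e^{μt} F)` with `F = z^k Θ_k(μ|z|²)`, so it is caloric as soon as `ΔF = μF`.
For `F = P(z) G(μ|z|²)` with `P`, `G` holomorphic, the coordinate second derivatives add up to
`ΔF = 4μ (z P'(z) G'(s) + P(z) (G'(s) + s G''(s)))`, `s = μ|z|²`. With `P = z^k` we have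
`z P' = k P`, so `ΔF = μF` is the ODE `4((k+1) G' + s G'') = G`, which `Θ_k` satisfies by the
coefficient recurrence `4 (n+1)(n+1+k) a_{n+1} = a_n`.
-/

open FormalMultilinearSeries
open scoped Nat

noncomputable def derivCoeff (c : ℕ → ℂ) (n : ℕ) : ℂ := (n + 1) * c (n + 1)

section PowerSeries

variable {c : ℕ → ℂ} {C A : ℝ}

lemma ofScalarsSum_apply (c : ℕ → ℂ) (z : ℂ) : ofScalarsSum c z = ∑' n, c n * z ^ n := by
  simp [ofScalarsSum_eq_tsum]

lemma summable_mul_pow_of_norm_le (hc : ∀ n, ‖c n‖ ≤ C * A ^ n / n !) (z : ℂ) :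
    Summable fun n => c n * z ^ n := by
  refine .of_norm_bounded ((Real.summable_pow_div_factorial (A * ‖z‖)).mul_left C) fun n => ?_
  rw [norm_mul, norm_pow, mul_pow]
  calc ‖c n‖ * ‖z‖ ^ n ≤ C * A ^ n / n ! * ‖z‖ ^ n := by gcongr; exact hc n
    _ = C * (A ^ n * ‖z‖ ^ n / n !) := by ring

lemma norm_derivCoeff_le (hc : ∀ n, ‖c n‖ ≤ C * A ^ n / n !) (n : ℕ) :
    ‖derivCoeff c n‖ ≤ C * A * A ^ n / n ! := by
  have hn : ‖((n : ℂ) + 1)‖ = n + 1 := by exact_mod_cast Complex.norm_natCast (n + 1)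
  rw [derivCoeff, norm_mul, hn]
  calc ((n : ℝ) + 1) * ‖c (n + 1)‖ ≤ (n + 1) * (C * A ^ (n + 1) / (n + 1)!) := by
        gcongr; exact hc (n + 1)
    _ = C * A * A ^ n / n ! := by
        rw [Nat.factorial_succ, pow_succ]; push_cast; field_simp

lemma hasDerivAt_ofScalarsSum (hc : ∀ n, ‖c n‖ ≤ C * A ^ n / n !) (z : ℂ) :
    HasDerivAt (ofScalarsSum c) (ofScalarsSum (derivCoeff c) z) z := by
  set R := ‖z‖ + 1
  have hR : 1 ≤ R := by simp [R]
  have bound : ∀ n (w : ℂ), ‖w‖ ≤ R → ‖c n * (n * w ^ (n - 1))‖ ≤ C * (2 * A * R) ^ n / n ! := by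
    intro n w hw
    rw [norm_mul, norm_mul, Complex.norm_natCast, norm_pow]
    have h2n : (n : ℝ) ≤ 2 ^ n := by exact_mod_cast Nat.lt_two_pow_self.le
    have hwR : ‖w‖ ^ (n - 1) ≤ R ^ n :=
      (pow_le_pow_left₀ (norm_nonneg w) hw _).trans (pow_le_pow_right₀ hR (Nat.sub_le n 1))
    calc ‖c n‖ * (n * ‖w‖ ^ (n - 1)) ≤ C * A ^ n / n ! * (2 ^ n * R ^ n) :=
          mul_le_mul (hc n) (mul_le_mul h2n hwR (by positivity) (by positivity)) (by positivity)
            ((norm_nonneg _).trans (hc n))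
      _ = C * (2 * A * R) ^ n / n ! := by rw [mul_pow, mul_pow]; ring
  have hu : Summable fun n => C * (2 * A * R) ^ n / n ! := by
    simpa only [mul_div_assoc] using (Real.summable_pow_div_factorial (2 * A * R)).mul_left C
  have hderiv : HasDerivAt (fun w => ∑' n, c n * w ^ n) (∑' n, c n * (n * z ^ (n - 1))) z :=
    hasDerivAt_tsum_of_isPreconnected hu Metric.isOpen_ball (convex_ball (0 : ℂ) R).isPreconnected
      (fun n w _ => (hasDerivAt_pow n w).const_mul (c n))
      (fun n w hw => bound n w (mem_ball_zero_iff.mp hw).le)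
      (by simp [R]; positivity) (summable_mul_pow_of_norm_le hc 0) (by simp [R])
  have hsum : Summable fun n => c n * (n * z ^ (n - 1)) :=
    .of_norm_bounded hu fun n => bound n z (by simp [R])
  have hvalue : ∑' n, c n * (n * z ^ (n - 1)) = ofScalarsSum (derivCoeff c) z := by
    rw [hsum.tsum_eq_zero_add, ofScalarsSum_apply]
    simp only [derivCoeff, Nat.cast_zero, zero_mul, mul_zero, zero_add, Nat.add_sub_cancel]
    push_cast
    congr 1 with n
    ring
  rw [← hvalue, ofScalarsSum_eq_tsum]
  simpa only [smul_eq_mul] using hderiv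

lemma ofScalarsSum_bessel_ode {ν : ℂ} (hc : ∀ n, ‖c n‖ ≤ C * A ^ n / n !)
    (hrec : ∀ n : ℕ, 4 * ((n + 1) * (n + 1 + ν)) * c (n + 1) = c n) (z : ℂ) :
    4 * ((ν + 1) * ofScalarsSum (derivCoeff c) z
      + z * ofScalarsSum (derivCoeff (derivCoeff c)) z) = ofScalarsSum c z := by
  have hc' := norm_derivCoeff_le hc
  set f : ℕ → ℂ := fun n => n * derivCoeff c n * z ^ n with hf
  have hshifted : Summable fun n => f (n + 1) := by
    refine ((summable_mul_pow_of_norm_le (norm_derivCoeff_le hc') z).mul_left z).congr fun n => ?_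
    simp only [hf, derivCoeff]; push_cast; ring
  have hzg'' : z * ofScalarsSum (derivCoeff (derivCoeff c)) z = ∑' n, f n := by
    rw [tsum_eq_zero_add' hshifted, ofScalarsSum_apply, ← tsum_mul_left]
    simp only [hf, derivCoeff]; push_cast
    simp only [zero_mul, zero_add]
    congr 1 with n; ring
  rw [hzg'', ofScalarsSum_apply, ofScalarsSum_apply, ← tsum_mul_left,
    ← ((summable_mul_pow_of_norm_le hc' z).mul_left _).tsum_add
      ((summable_nat_add_iff 1).mp hshifted), ← tsum_mul_left]
  congr 1 with n
  rw [← hrec]; simp only [hf, derivCoeff]; ring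

end PowerSeries

noncomputable def thetaCoeff (k n : ℕ) : ℂ := ((n ! : ℂ) * (n + k)! * 4 ^ n)⁻¹

lemma Theta_natCast_eq (k : ℕ) : Theta k = ofScalarsSum (thetaCoeff k) := by
  ext z
  rw [Theta, ofScalarsSum_apply]
  congr 1 with n
  rw [show (n : ℂ) + 1 + k = (n + k : ℕ) + 1 by push_cast; ring,
    Complex.Gamma_nat_eq_factorial, thetaCoeff, div_pow]
  field_simp

lemma norm_thetaCoeff_le (k n : ℕ) : ‖thetaCoeff k n‖ ≤ 1 * 1 ^ n / n ! := by
  have hk : (1 : ℝ) ≤ (n + k)! * 4 ^ n :=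
    one_le_mul_of_one_le_of_one_le (mod_cast Nat.one_le_iff_ne_zero.mpr (Nat.factorial_ne_zero _))
      (one_le_pow₀ (by norm_num))
  rw [thetaCoeff, norm_inv, one_pow, one_mul, one_div]
  simp only [norm_mul, norm_pow, Complex.norm_natCast, Complex.norm_ofNat, mul_assoc]
  exact inv_anti₀ (by positivity) (le_mul_of_one_le_right (by positivity) hk)

lemma thetaCoeff_succ (k n : ℕ) :
    4 * ((n + 1) * (n + 1 + k)) * thetaCoeff k (n + 1) = thetaCoeff k n := by
  have hn : (n : ℂ) + 1 ≠ 0 := Nat.cast_add_one_ne_zero n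
  have hnk : (n : ℂ) + k + 1 ≠ 0 := by exact_mod_cast Nat.succ_ne_zero (n + k)
  rw [thetaCoeff, thetaCoeff, Nat.factorial_succ, show n + 1 + k = n + k + 1 by ring,
    Nat.factorial_succ, pow_succ]
  push_cast
  field_simp
  ring

def HasSecondDerivAt (f : ℝ → ℂ) (f'' : ℂ) (a : ℝ) : Prop :=
  ∃ f' : ℝ → ℂ, (∀ b, HasDerivAt f (f' b) b) ∧ HasDerivAt f' f'' a

def HasLaplacian (F L : ℝ → ℝ → ℂ) : Prop :=
  ∃ Fxx Fyy : ℝ → ℝ → ℂ, (∀ x y, HasSecondDerivAt (fun a => F a y) (Fxx x y) x) ∧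
    (∀ x y, HasSecondDerivAt (F x) (Fyy x y) y) ∧ ∀ x y, Fxx x y + Fyy x y = L x y

def SolvesHeatEquation (u : ℝ → ℝ → ℝ → ℝ) : Prop :=
  ∀ x y t : ℝ,
    deriv (fun t' : ℝ => u x y t') t
      - (deriv (fun x' : ℝ => deriv (fun x'' : ℝ => u x'' y t) x') x +
          deriv (fun y' : ℝ => deriv (fun y'' : ℝ => u x y'' t) y') y) = 0

lemma HasDerivAt.re {f : ℝ → ℂ} {f' : ℂ} {a : ℝ} (h : HasDerivAt f f' a) :
    HasDerivAt (fun b => (f b).re) f'.re a :=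
  reCLM.hasFDerivAt.comp_hasDerivAt a h

lemma HasSecondDerivAt.deriv_deriv_re_const_mul {f : ℝ → ℂ} {f'' : ℂ} {a : ℝ}
    (h : HasSecondDerivAt f f'' a) (c : ℂ) :
    deriv (fun b => deriv (fun b => (c * f b).re) b) a = (c * f'').re := by
  obtain ⟨f', hf', hf''⟩ := h
  have hderiv : (fun b => deriv (fun b => (c * f b).re) b) = fun b => (c * f' b).re :=
    funext fun b => ((hf' b).const_mul c).re.deriv
  rw [hderiv]
  exact (hf''.const_mul c).re.deriv

lemma hasDerivAt_ofReal (a : ℝ) : HasDerivAt (fun b : ℝ => (b : ℂ)) 1 a := by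
  simpa using (hasDerivAt_id a).ofReal_comp

section ProductAlongCurves

variable {P P' P'' G G' G'' : ℂ → ℂ} {γ s s' : ℝ → ℂ} {v σ : ℂ}

lemma hasDerivAt_comp_mul_comp (hP : ∀ w, HasDerivAt P (P' w) w)
    (hG : ∀ w, HasDerivAt G (G' w) w) (hγ : ∀ a, HasDerivAt γ v a)
    (hs : ∀ a, HasDerivAt s (s' a) a) (a : ℝ) :
    HasDerivAt (fun a => P (γ a) * G (s a))
      (v * (P' (γ a) * G (s a)) + s' a * (P (γ a) * G' (s a))) a :=
  (((hP (γ a)).comp a (hγ a)).mul ((hG (s a)).comp a (hs a))).congr_deriv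
    (by simp only [Function.comp_apply]; ring)

lemma hasSecondDerivAt_comp_mul_comp (hP : ∀ w, HasDerivAt P (P' w) w)
    (hP' : ∀ w, HasDerivAt P' (P'' w) w) (hG : ∀ w, HasDerivAt G (G' w) w)
    (hG' : ∀ w, HasDerivAt G' (G'' w) w) (hγ : ∀ a, HasDerivAt γ v a)
    (hs : ∀ a, HasDerivAt s (s' a) a) (hs' : ∀ a, HasDerivAt s' σ a) (a : ℝ) :
    HasSecondDerivAt (fun a => P (γ a) * G (s a))
      (v ^ 2 * P'' (γ a) * G (s a) + 2 * v * s' a * P' (γ a) * G' (s a)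
        + σ * P (γ a) * G' (s a) + s' a ^ 2 * P (γ a) * G'' (s a)) a := by
  refine ⟨_, hasDerivAt_comp_mul_comp hP hG hγ hs, ?_⟩
  exact (((hasDerivAt_comp_mul_comp hP' hG hγ hs a).const_mul v).add
    ((hs' a).mul (hasDerivAt_comp_mul_comp hP hG' hγ hs a))).congr_deriv (by ring)

lemma hasLaplacian_comp_mul_comp (hP : ∀ w, HasDerivAt P (P' w) w)
    (hP' : ∀ w, HasDerivAt P' (P'' w) w) (hG : ∀ w, HasDerivAt G (G' w) w)
    (hG' : ∀ w, HasDerivAt G' (G'' w) w) (μ : ℂ) :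
    HasLaplacian (fun x y : ℝ => P (x + y * I) * G (μ * (x ^ 2 + y ^ 2)))
      (fun x y => 4 * μ * ((x + y * I) * P' (x + y * I) * G' (μ * (x ^ 2 + y ^ 2))
        + P (x + y * I) * (G' (μ * (x ^ 2 + y ^ 2))
          + μ * (x ^ 2 + y ^ 2) * G'' (μ * (x ^ 2 + y ^ 2))))) := by
  have hsq (a : ℝ) : HasDerivAt (fun b : ℝ => (b : ℂ) ^ 2) (2 * a) a := by
    simpa using (hasDerivAt_pow 2 (a : ℂ)).comp_ofReal
  have hlin (a : ℝ) : HasDerivAt (fun b : ℝ => μ * (2 * b)) (μ * 2) a := by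
    simpa using ((hasDerivAt_ofReal a).const_mul 2).const_mul μ
  refine ⟨_, _, fun x y => hasSecondDerivAt_comp_mul_comp hP hP' hG hG'
      (fun a => (hasDerivAt_ofReal a).add_const (y * I))
      (fun a => ((hsq a).add_const _).const_mul μ) hlin x,
    fun x y => hasSecondDerivAt_comp_mul_comp hP hP' hG hG'
      (fun b => ((hasDerivAt_ofReal b).mul_const I).const_add (x : ℂ))
      (fun b => ((hsq b).const_add _).const_mul μ) hlin y, fun x y => ?_⟩
  -- the `P''` terms cancel because `1 + I ^ 2 = 0`
  linear_combination (P'' (x + y * I) * G (μ * (x ^ 2 + y ^ 2))) * I_sq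

end ProductAlongCurves

lemma hasLaplacian_pow_mul_comp {k : ℕ} {G G' G'' : ℂ → ℂ} (hG : ∀ w, HasDerivAt G (G' w) w)
    (hG' : ∀ w, HasDerivAt G' (G'' w) w) (hode : ∀ w, 4 * ((k + 1) * G' w + w * G'' w) = G w)
    (μ : ℂ) :
    HasLaplacian (fun x y : ℝ => (x + y * I) ^ k * G (μ * (x ^ 2 + y ^ 2)))
      fun x y => μ * ((x + y * I) ^ k * G (μ * (x ^ 2 + y ^ 2))) := by
  obtain ⟨Fxx, Fyy, hxx, hyy, hΔ⟩ := hasLaplacian_comp_mul_comp (fun w => hasDerivAt_pow k w)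
    (fun w => (hasDerivAt_pow (k - 1) w).const_mul (k : ℂ)) hG hG' μ
  refine ⟨Fxx, Fyy, hxx, hyy, fun x y => ?_⟩
  have hEuler (z : ℂ) : z * (k * z ^ (k - 1)) = k * z ^ k := by
    cases k <;> simp [pow_succ]; ring
  rw [hΔ]
  linear_combination (4 * μ * G' (μ * (x ^ 2 + y ^ 2))) * hEuler (x + y * I)
    + μ * (x + y * I) ^ k * hode (μ * (x ^ 2 + y ^ 2))

lemma solvesHeatEquation_re_mul_exp {F : ℝ → ℝ → ℂ} {μ : ℂ}
    (hF : HasLaplacian F fun x y => μ * F x y) (c : ℂ) :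
    SolvesHeatEquation fun x y t => (c * cexp (μ * t) * F x y).re := by
  obtain ⟨Fxx, Fyy, hxx, hyy, hΔ⟩ := hF
  intro x y t
  have ht : HasDerivAt (fun t : ℝ => c * cexp (μ * t) * F x y)
      (c * (cexp (μ * t) * (μ * 1)) * F x y) t :=
    ((((hasDerivAt_ofReal t).const_mul μ).cexp).const_mul c).mul_const (F x y)
  rw [ht.re.deriv, (hxx x y).deriv_deriv_re_const_mul, (hyy x y).deriv_deriv_re_const_mul,
    ← add_re, ← sub_re]
  have hzero : c * (cexp (μ * t) * (μ * 1)) * F x y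
      - (c * cexp (μ * t) * Fxx x y + c * cexp (μ * t) * Fyy x y) = 0 := by
    linear_combination (-(c * cexp (μ * t))) * hΔ x y
  rw [hzero, zero_re]

lemma rotCaloric_eq {ω : ℝ} (hω : 0 ≤ ω) (k : ℕ) :
    rotCaloric ω k = fun x y t : ℝ => ((((√(2 * ω * k) / 2 : ℝ) : ℂ) * (1 + I) / 2) ^ k
      * cexp (I * ω * k * t) * ((x + y * I) ^ k * Theta k (I * ω * k * (x ^ 2 + y ^ 2)))).re := by
  funext x y t
  rw [rotCaloric, besselI]
  set z : ℂ := x + y * I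
  set c : ℂ := ((√(2 * ω * k) / 2 : ℝ) : ℂ) * (1 + I)
  have hc : c ^ 2 = I * ω * k := by
    have hsqrt : (√(2 * ω * k)) ^ 2 = 2 * ω * k := Real.sq_sqrt (by positivity)
    calc c ^ 2 = ((√(2 * ω * k) ^ 2 : ℝ) : ℂ) / 4 * (1 + I) ^ 2 := by
          simp only [c]; push_cast; ring
      _ = I * ω * k := by rw [hsqrt]; push_cast; linear_combination (ω * k / 2 : ℂ) * I_sq
  have hnorm : ((‖z‖ : ℝ) : ℂ) ^ 2 = x ^ 2 + y ^ 2 := by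
    rw [← ofReal_pow, Complex.sq_norm, normSq_add_mul_I]; push_cast; ring
  have hpolar : ((‖z‖ : ℝ) : ℂ) ^ k * cexp (I * k * arg z) = z ^ k := by
    rw [show I * k * arg z = k * (arg z * I) by ring, Complex.exp_nat_mul, ← mul_pow,
      norm_mul_exp_arg_mul_I]
  rw [mul_pow c, hc, hnorm]
  congr 1
  rw [mul_add, Complex.exp_add, show I * k * (ω * t) = I * ω * k * t by ring, ← hpolar,
    mul_div_right_comm, mul_pow]
  ring

theorem rotCaloric_solves_heat_general (ω : ℝ) (hω : 0 < ω) (k : ℕ) :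
    ∀ x y t : ℝ,
      deriv (fun t' : ℝ => rotCaloric ω k x y t') t
        - (deriv (fun x' : ℝ => deriv (fun x'' : ℝ => rotCaloric ω k x'' y t) x') x +
            deriv (fun y' : ℝ => deriv (fun y'' : ℝ => rotCaloric ω k x y'' t) y') y) = 0 := by
  have hΘ := norm_thetaCoeff_le k
  have hF := hasLaplacian_pow_mul_comp (hasDerivAt_ofScalarsSum hΘ)
    (hasDerivAt_ofScalarsSum (norm_derivCoeff_le hΘ))
    (ofScalarsSum_bessel_ode hΘ (thetaCoeff_succ k)) (I * ω * k)
  rw [rotCaloric_eq hω.le, Theta_natCast_eq]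
  exact solvesHeatEquation_re_mul_exp hF _

/-- For `ω > 0` and an integer `k ≥ 1`, the rotating function
`U(re^{iθ},t) = Re(e^{ik(θ+ωt)} I_k((√(2ωk)/2)(1+i)r))` is an entire eternal
solution of the heat equation `U_t − ΔU = 0` on `ℝ² × ℝ`. -/
theorem rotCaloric_solves_heat (ω : ℝ) (hω : 0 < ω) (k : ℕ) (hk : 1 ≤ k) :
    ∀ x y t : ℝ,
      deriv (fun t' : ℝ => rotCaloric ω k x y t') t
        - (deriv (fun x' : ℝ => deriv (fun x'' : ℝ => rotCaloric ω k x'' y t) x') x +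
            deriv (fun y' : ℝ => deriv (fun y'' : ℝ => rotCaloric ω k x y'' t) y') y) = 0 :=
  rotCaloric_solves_heat_general ω hω k
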